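/- arXiv:2211.11445 — 2 statements merged into one kernel-verified Lean document; each statement's English description precedes it below -/
import Mathlib

section
/- Let l ≥ 1, let z be an integer with 0 ≤ z < 2^(l+1), let ρ be any nonnegative integer, and let w = z + ρ. Then the pair (w mod 2^l, ρ mod 2^l) does not determine the l-th bit of z: there exist z₁, z₂ with 0 ≤ z₁, z₂ < 2^(l+1) and ρ₁, ρ₂ ≥ 0 such that (z₁ + ρ₁) mod 2^l = (z₂ + ρ₂) mod 2^l, ρ₁ mod 2^l = ρ₂ mod 2^l, but the l-th bit of z₁ is 0 and the l-th bit of z₂ is 1. -/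
theorem stmt_0_general (l : ℕ) :
    ∃ z₁ z₂ ρ₁ ρ₂ : ℕ,
      z₁ < 2 ^ (l + 1) ∧ z₂ < 2 ^ (l + 1) ∧
      (z₁ + ρ₁) % 2 ^ l = (z₂ + ρ₂) % 2 ^ l ∧
      ρ₁ % 2 ^ l = ρ₂ % 2 ^ l ∧
      z₁ / 2 ^ l % 2 = 0 ∧ z₂ / 2 ^ l % 2 = 1 :=
  ⟨0, 2 ^ l, 0, 0, by positivity, Nat.pow_lt_pow_succ one_lt_two, by simp, rfl, by simp,
    by simp [Nat.div_self (Nat.two_pow_pos l)]⟩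

/-- The pair (w mod 2^l, ρ mod 2^l) with w = z + ρ does not determine the l-th bit of z. -/
theorem stmt_0 (l : ℕ) (hl : 1 ≤ l) :
    ∃ z₁ z₂ ρ₁ ρ₂ : ℕ,
      z₁ < 2 ^ (l + 1) ∧ z₂ < 2 ^ (l + 1) ∧
      (z₁ + ρ₁) % 2 ^ l = (z₂ + ρ₂) % 2 ^ l ∧
      ρ₁ % 2 ^ l = ρ₂ % 2 ^ l ∧
      z₁ / 2 ^ l % 2 = 0 ∧ z₂ / 2 ^ l % 2 = 1 :=
  stmt_0_general l
end

section
/- Let l ≥ 1, d_a, d_b integers with 0 ≤ d_a, d_b < 2^l, z = 2^l + d_a − d_b, and ρ a nonnegative integer, w = z + ρ. Then (w − ρ) determines the comparison: d_a ≥ d_b if and only if w − ρ ≥ 2^l; but there exist d_a, d_b, d_a', d_b' and ρ, ρ' with (z+ρ) mod 2^l = (z'+ρ') mod 2^l and ρ mod 2^l = ρ' mod 2^l while d_a ≥ d_b and d_a' < d_b'. -/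
/-!
Subtracting the mask ρ from w = 2^l + d_a − d_b + ρ returns 2^l + d_a − d_b, which lies in
[2^l, 2^(l+1)) exactly when d_a ≥ d_b. Modulo 2^l, however, the offset 2^l vanishes and only
d_a − d_b mod 2^l survives; the differences 1 and 1 − 2^l agree there but have opposite signs.
-/

namespace Int

theorem offset_add_emod_eq_of_modEq {N a b a' b' : ℤ} (ρ ρ' : ℤ)
    (hsub : a - b ≡ a' - b' [ZMOD N]) (hρ : ρ ≡ ρ' [ZMOD N]) :
    (N + a - b + ρ) % N = (N + a' - b' + ρ') % N := by
  rw [add_sub_assoc, add_sub_assoc]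
  exact ((Int.ModEq.refl N).add hsub).add hρ

theorem exists_offset_emod_eq_le_and_lt {N : ℤ} (hN : 1 < N) :
    ∃ a b a' b' ρ ρ' : ℤ,
      0 ≤ a ∧ a < N ∧ 0 ≤ b ∧ b < N ∧
      0 ≤ a' ∧ a' < N ∧ 0 ≤ b' ∧ b' < N ∧
      0 ≤ ρ ∧ 0 ≤ ρ' ∧
      (N + a - b + ρ) % N = (N + a' - b' + ρ') % N ∧
      ρ % N = ρ' % N ∧
      b ≤ a ∧ a' < b' := by
  have hsub : (1 : ℤ) - 0 ≡ 0 - (N - 1) [ZMOD N] :=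
    Int.modEq_iff_dvd.mpr ⟨-1, by ring⟩
  exact ⟨1, 0, 0, N - 1, 0, 0, by omega, by omega, le_rfl, by omega, le_rfl, by omega, by omega,
    by omega, le_rfl, le_rfl, offset_add_emod_eq_of_modEq 0 0 hsub rfl, rfl,
    zero_le_one, by omega⟩

end Int

/-- w - ρ determines the comparison, but the residues mod 2^l do not. -/
theorem stmt_12 (l : ℕ) (hl : 1 ≤ l) :
    (∀ dA dB ρ : ℤ, 0 ≤ dA → dA < 2 ^ l → 0 ≤ dB → dB < 2 ^ l → 0 ≤ ρ →
      (dB ≤ dA ↔ 2 ^ l ≤ ((2 ^ l + dA - dB) + ρ) - ρ)) ∧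
    (∃ dA dB dA' dB' ρ ρ' : ℤ,
      0 ≤ dA ∧ dA < 2 ^ l ∧ 0 ≤ dB ∧ dB < 2 ^ l ∧
      0 ≤ dA' ∧ dA' < 2 ^ l ∧ 0 ≤ dB' ∧ dB' < 2 ^ l ∧
      0 ≤ ρ ∧ 0 ≤ ρ' ∧
      ((2 ^ l + dA - dB) + ρ) % 2 ^ l = ((2 ^ l + dA' - dB') + ρ') % 2 ^ l ∧
      ρ % 2 ^ l = ρ' % 2 ^ l ∧
      dB ≤ dA ∧ dA' < dB') :=
  ⟨fun _ _ _ _ _ _ _ _ => by omega,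
    Int.exists_offset_emod_eq_le_and_lt (one_lt_pow₀ one_lt_two (by omega))⟩
end
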